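/- arXiv:1102.2878 — 3 statements merged into one kernel-verified Lean document; each statement's English description precedes it below -/
import Mathlib

section
/- For every t, s ∈ ℝ, the generating function identity e^{2ts − s²} = Σ_{n=0}^{∞} (sⁿ/n!) Hₙ(t) holds, where the series on the right converges. -/
/-- The `n`-th physicists' Hermite polynomial (as a function), defined by the
Rodrigues formula `Hₙ(t) = (−1)ⁿ e^{t²} (dⁿ/dtⁿ) e^{−t²}`. -/
noncomputable def hermitePoly (n : ℕ) (t : ℝ) : ℝ :=
  (-1 : ℝ) ^ n * Real.exp (t ^ 2) * iteratedDeriv n (fun x => Real.exp (-x ^ 2)) t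

/-!
`e^{-z²}` is entire, so its Taylor series at `t` converges to it at `t - s`. Multiplying by
`e^{t²}` turns the Taylor coefficients `(-s)ⁿ/n! · (dⁿ/dtⁿ) e^{-t²}` into `sⁿ/n! · Hₙ(t)` and
the sum into `e^{t² - (t - s)²} = e^{2ts - s²}`.
-/

open Nat

section RealRestriction

variable {f : ℂ → ℂ} {g : ℝ → ℝ}

theorem ofReal_deriv_of_differentiable (hf : Differentiable ℂ f)
    (hfg : ∀ x : ℝ, (g x : ℂ) = f x) (x : ℝ) : ((deriv g x : ℝ) : ℂ) = deriv f x := by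
  have hg_eq : g = fun y : ℝ => (f y).re := funext fun y => by rw [← hfg, Complex.ofReal_re]
  have hg : HasDerivAt g (deriv f x).re x := by
    rw [hg_eq]; exact (hf x).hasDerivAt.real_of_complex
  have hcast : HasDerivAt (fun y : ℝ => f y) ((deriv f x).re : ℂ) x := by
    simpa only [hfg] using hg.ofReal_comp
  rw [hg.deriv, hcast.unique (hf x).hasDerivAt.comp_ofReal]

theorem ofReal_iteratedDeriv_of_differentiable (hf : Differentiable ℂ f)
    (hfg : ∀ x : ℝ, (g x : ℂ) = f x) (n : ℕ) (x : ℝ) :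
    ((iteratedDeriv n g x : ℝ) : ℂ) = iteratedDeriv n f x := by
  induction n generalizing f g with
  | zero => simpa using hfg x
  | succ n ih =>
    rw [iteratedDeriv_succ', iteratedDeriv_succ']
    exact ih hf.deriv (ofReal_deriv_of_differentiable hf hfg)

theorem hasSum_taylorSeries_of_ofReal_entire (hf : Differentiable ℂ f)
    (hfg : ∀ x : ℝ, (g x : ℂ) = f x) (x y : ℝ) :
    HasSum (fun n : ℕ => (n ! : ℝ)⁻¹ * (y - x) ^ n * iteratedDeriv n g x) (g y) := by
  rw [← Complex.hasSum_ofReal, hfg]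
  refine (Complex.hasSum_taylorSeries_of_entire hf (x : ℂ) (y : ℂ)).congr_fun fun n => ?_
  push_cast
  rw [ofReal_iteratedDeriv_of_differentiable hf hfg, smul_eq_mul, smul_eq_mul, mul_assoc]

end RealRestriction

/-- Generating function identity for the Hermite polynomials:
`e^{2ts − s²} = Σ_{n=0}^{∞} (sⁿ/n!) Hₙ(t)`, the series converging. -/
theorem hermite_generating_function (t s : ℝ) :
    HasSum (fun n : ℕ => s ^ n / (Nat.factorial n : ℝ) * hermitePoly n t)
      (Real.exp (2 * t * s - s ^ 2)) := by
  have htaylor := hasSum_taylorSeries_of_ofReal_entire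
    (f := fun z : ℂ => Complex.exp (-z ^ 2)) (g := fun x : ℝ => Real.exp (-x ^ 2))
    (by fun_prop) (fun x => by push_cast; rfl) t (t - s)
  have hexp : Real.exp (2 * t * s - s ^ 2) = Real.exp (t ^ 2) * Real.exp (-(t - s) ^ 2) := by
    rw [← Real.exp_add]
    ring_nf
  rw [hexp]
  refine (htaylor.mul_left (Real.exp (t ^ 2))).congr_fun fun n => ?_
  simp only [hermitePoly, sub_sub_cancel_left, neg_pow s, div_eq_inv_mul]
  ring
end

section
/- Let D ≥ 1, h > 0, and t, s, s₀ ∈ ℝᴰ. Then the multivariate far-field (primal) Hermite expansion holds: e^{−‖t − s‖²/(2h²)} = Σ_{α ∈ ℕᴰ} (1/α!) ((s − s₀)/√(2h²))^α h_α((t − s₀)/√(2h²)), where ‖·‖ is the Euclidean norm, division of a vector by √(2h²) is componentwise scaling, and the multi-index series converges (e.g., the family is summable). -/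
open Finset

/-- The `n`-th Hermite function: `hₙ(t) = (−1)ⁿ (dⁿ/dtⁿ) e^{−t²}`. -/
noncomputable def hermiteFun (n : ℕ) (t : ℝ) : ℝ :=
  (-1 : ℝ) ^ n * iteratedDeriv n (fun x => Real.exp (-x ^ 2)) t

/-- Multivariate Hermite function `h_α(x) = ∏_{d} h_{α[d]}(x[d])`. -/
noncomputable def hermiteFunMulti {D : ℕ} (α : Fin D → ℕ) (x : Fin D → ℝ) : ℝ :=
  ∏ d, hermiteFun (α d) (x d)

/-- Multi-index factorial `α! = ∏_d (α[d])!`. -/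
def mFactorial {D : ℕ} (α : Fin D → ℕ) : ℕ := ∏ d, Nat.factorial (α d)

/-- Multi-index power `x^α = ∏_d (x[d])^{α[d]}`. -/
def mPow {D : ℕ} (x : Fin D → ℝ) (α : Fin D → ℕ) : ℝ := ∏ d, (x d) ^ (α d)

/-!
In one variable, `y ↦ e^{-(x - y)²}` is the restriction of an entire function whose `n`-th
derivative at `0` is `(-1)ⁿ (dⁿ/dtⁿ) e^{-t²}` at `t = x`, i.e. `hₙ(x)`; so
`e^{-(x - y)²} = Σₙ yⁿ/n! hₙ(x)` is its Taylor series at `0`. The Gaussian kernel factorises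
over coordinates, and so does the multi-index series: it is the product of `D` one-variable
series, each absolutely convergent because unconditional summability in `ℝ` is absolute.
-/

open Nat

section FinProduct

variable {R κ : Type*} [NormedCommRing R]

theorem summable_norm_prod_fin {D : ℕ} {f : Fin D → κ → R}
    (hf : ∀ d, Summable fun k => ‖f d k‖) :
    Summable fun α : Fin D → κ => ‖∏ d, f d (α d)‖ := by
  induction D with
  | zero => exact Summable.of_finite
  | succ D ih =>
    rw [← (Fin.consEquiv fun _ => κ).summable_iff]
    simpa [Function.comp_def, Fin.prod_univ_succ, Fin.consEquiv] using
      (hf 0).mul_norm (ih fun d => hf d.succ)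

theorem hasSum_prod_fin_of_summable_norm [CompleteSpace R] {D : ℕ} {f : Fin D → κ → R}
    {a : Fin D → R} (hf : ∀ d, HasSum (f d) (a d)) (hf' : ∀ d, Summable fun k => ‖f d k‖) :
    HasSum (fun α : Fin D → κ => ∏ d, f d (α d)) (∏ d, a d) := by
  induction D with
  | zero => simp
  | succ D ih =>
    rw [← (Fin.consEquiv fun _ => κ).hasSum_iff, Fin.prod_univ_succ]
    have hprod := summable_mul_of_summable_norm (hf' 0) (summable_norm_prod_fin fun d => hf' d.succ)
    refine ((hf 0).mul (ih (fun d => hf d.succ) fun d => hf' d.succ) hprod).congr_fun fun p => ?_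
    simp [Fin.prod_univ_succ, Fin.consEquiv]

end FinProduct

theorem iteratedDeriv_ofReal_of_differentiable {f : ℂ → ℂ} (hf : Differentiable ℂ f) {g : ℝ → ℝ}
    (hfg : ∀ x : ℝ, f x = g x) (n : ℕ) (x : ℝ) :
    iteratedDeriv n f x = (iteratedDeriv n g x : ℝ) := by
  induction n generalizing x with
  | zero => simpa using hfg x
  | succ n ih =>
    set f' := deriv (iteratedDeriv n f) x
    have hF : HasDerivAt (iteratedDeriv n f) f' x :=
      (hf.contDiff.differentiable_iteratedDeriv' n x).hasDerivAt
    have hG : HasDerivAt (iteratedDeriv n g) f'.re x := by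
      simpa [ih] using hF.real_of_complex
    have hF_real : HasDerivAt (fun y : ℝ => ((iteratedDeriv n g y : ℝ) : ℂ)) f' x := by
      simpa [ih] using hF.comp_ofReal
    rw [iteratedDeriv_succ, iteratedDeriv_succ, hG.deriv]
    exact hF_real.unique hG.ofReal_comp

theorem hasSum_taylorSeries_of_differentiable_ofReal {f : ℂ → ℂ} (hf : Differentiable ℂ f)
    {g : ℝ → ℝ} (hfg : ∀ x : ℝ, f x = g x) (c y : ℝ) :
    HasSum (fun n => (n ! : ℝ)⁻¹ * (y - c) ^ n * iteratedDeriv n g c) (g y) := by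
  rw [← Complex.hasSum_ofReal, ← hfg]
  refine (Complex.hasSum_taylorSeries_of_entire hf c y).congr_fun fun n => ?_
  simp [iteratedDeriv_ofReal_of_differentiable hf hfg, mul_assoc]

theorem hermiteFun_eq_iteratedDeriv (n : ℕ) (x : ℝ) :
    hermiteFun n x = iteratedDeriv n (fun y => Real.exp (-(x - y) ^ 2)) 0 := by
  rw [iteratedDeriv_comp_const_sub (f := fun y => Real.exp (-y ^ 2))]
  simp [hermiteFun]

theorem hasSum_hermiteFun (x y : ℝ) :
    HasSum (fun n => 1 / (n ! : ℝ) * y ^ n * hermiteFun n x) (Real.exp (-(x - y) ^ 2)) := by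
  have hf : Differentiable ℂ fun z : ℂ => Complex.exp (-(x - z) ^ 2) := by fun_prop
  simpa [hermiteFun_eq_iteratedDeriv] using
    hasSum_taylorSeries_of_differentiable_ofReal hf (g := fun y => Real.exp (-(x - y) ^ 2))
      (fun z => by push_cast; rfl) 0 y

theorem one_div_mFactorial_mul_mPow_mul_hermiteFunMulti {D : ℕ} (α : Fin D → ℕ)
    (x y : Fin D → ℝ) :
    1 / (mFactorial α : ℝ) * mPow y α * hermiteFunMulti α x =
      ∏ d, 1 / ((α d)! : ℝ) * y d ^ α d * hermiteFun (α d) (x d) := by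
  simp [mFactorial, mPow, hermiteFunMulti, prod_mul_distrib]

theorem hasSum_hermiteFunMulti {D : ℕ} (x y : Fin D → ℝ) :
    HasSum (fun α : Fin D → ℕ => 1 / (mFactorial α : ℝ) * mPow y α * hermiteFunMulti α x)
      (Real.exp (-∑ d, (x d - y d) ^ 2)) := by
  have hsum d := hasSum_hermiteFun (x d) (y d)
  simp_rw [one_div_mFactorial_mul_mPow_mul_hermiteFunMulti, ← sum_neg_distrib, Real.exp_sum]
  convert hasSum_prod_fin_of_summable_norm hsum fun d => (hsum d).summable.norm using 1

theorem multivariate_farfield_expansion_general (D : ℕ) (h : ℝ)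
    (t s s₀ : Fin D → ℝ) :
    HasSum
      (fun α : Fin D → ℕ => (1 / (mFactorial α : ℝ)) *
        mPow (fun d => (s d - s₀ d) / Real.sqrt (2 * h ^ 2)) α *
        hermiteFunMulti α (fun d => (t d - s₀ d) / Real.sqrt (2 * h ^ 2)))
      (Real.exp (-(∑ d, (t d - s d) ^ 2) / (2 * h ^ 2))) := by
  convert hasSum_hermiteFunMulti _ _ using 2
  have hc : Real.sqrt (2 * h ^ 2) ^ 2 = 2 * h ^ 2 := Real.sq_sqrt (by positivity)
  rw [neg_div, sum_div]
  refine congrArg _ (sum_congr rfl fun d _ => ?_)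
  rw [div_sub_div_same, sub_sub_sub_cancel_right, div_pow, hc]

/-- Multivariate far-field (primal) Hermite expansion:
`e^{−‖t − s‖²/(2h²)} = Σ_{α ∈ ℕᴰ} (1/α!) ((s − s₀)/√(2h²))^α h_α((t − s₀)/√(2h²))`,
the multi-index family being summable. -/
theorem multivariate_farfield_expansion (D : ℕ) (hD : 1 ≤ D) (h : ℝ) (hh : 0 < h)
    (t s s₀ : Fin D → ℝ) :
    HasSum
      (fun α : Fin D → ℕ => (1 / (mFactorial α : ℝ)) *
        mPow (fun d => (s d - s₀ d) / Real.sqrt (2 * h ^ 2)) α *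
        hermiteFunMulti α (fun d => (t d - s₀ d) / Real.sqrt (2 * h ^ 2)))
      (Real.exp (-(∑ d, (t d - s d) ^ 2) / (2 * h ^ 2))) :=
  multivariate_farfield_expansion_general D h t s s₀
end

section
/- Let h > 0, 0 < ρ < 1, p ≥ 1 an integer, and let s, c, t ∈ ℝ with |s − c| < ρh. Then the partial sum of the one-dimensional Hermite expansion is bounded: |Σ_{n=0}^{p−1} (1/n!) ((s − c)/√(2h²))ⁿ hₙ((t − c)/√(2h²))| ≤ (1 − ρᵖ)/(1 − ρ). -/
/-!
Termwise, `|hₙ(u)| ≤ n! (√2)ⁿ`, so the `n`-th term is at most `(|s - c| / h)ⁿ < ρⁿ` and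
the partial sum is dominated by a geometric sum. For `n ≥ 3` the bound on `hₙ` is Cauchy's
estimate for the entire function `e^{-z²}` on the circle of radius `√(n/2)` around the real
point `u`, where `|e^{-z²}| ≤ e^{(Im z)²} ≤ e^{n/2}`; it then reduces to `e ≤ n`. For `n ≤ 2`,
where that estimate is too weak, the bound is checked on the explicit derivatives.
-/

open Finset

open Nat Metric

theorem iteratedDeriv_re_comp_ofReal {f : ℂ → ℂ} (hf : Differentiable ℂ f) (n : ℕ) :
    iteratedDeriv n (fun x : ℝ => (f x).re) = fun x : ℝ => (iteratedDeriv n f x).re := by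
  induction n with
  | zero => rfl
  | succ n ih =>
    funext x
    rw [iteratedDeriv_succ, ih, iteratedDeriv_succ]
    exact ((hf.contDiff (n := ⊤)).differentiable_iteratedDeriv n (by simp) x).hasDerivAt
      |>.real_of_complex.deriv

theorem iteratedDeriv_exp_neg_sq_eq_re (n : ℕ) (x : ℝ) :
    iteratedDeriv n (fun x : ℝ => Real.exp (-x ^ 2)) x =
      (iteratedDeriv n (fun z : ℂ => Complex.exp (-z ^ 2)) x).re := by
  have hf : Differentiable ℂ fun z : ℂ => Complex.exp (-z ^ 2) := by fun_prop
  rw [← congrFun (iteratedDeriv_re_comp_ofReal hf n) x]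
  congr 1
  funext x
  rw [← Complex.ofReal_pow, ← Complex.ofReal_neg, ← Complex.ofReal_exp, Complex.ofReal_re]

theorem norm_cexp_neg_sq_le (z : ℂ) : ‖Complex.exp (-z ^ 2)‖ ≤ Real.exp (z.im ^ 2) := by
  rw [Complex.norm_exp]
  gcongr
  simp only [Complex.neg_re, sq, Complex.mul_re]
  nlinarith [mul_self_nonneg z.re]

theorem abs_iteratedDeriv_exp_neg_sq_le_of_pos (n : ℕ) (x : ℝ) {R : ℝ} (hR : 0 < R) :
    |iteratedDeriv n (fun x : ℝ => Real.exp (-x ^ 2)) x| ≤ n ! * Real.exp (R ^ 2) / R ^ n := by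
  rw [iteratedDeriv_exp_neg_sq_eq_re]
  refine (Complex.abs_re_le_norm _).trans <|
    Complex.norm_iteratedDeriv_le_of_forall_mem_sphere_norm_le n hR
      (Differentiable.diffContOnCl (by fun_prop)) fun z hz => (norm_cexp_neg_sq_le z).trans ?_
  have him : |z.im| ≤ R := by
    simpa [← mem_sphere_iff_norm.1 hz] using Complex.abs_im_le_norm (z - x)
  exact Real.exp_le_exp.2 (sq_le_sq' (abs_le.1 him).1 (abs_le.1 him).2)

theorem abs_iteratedDeriv_exp_neg_sq_le_of_three_le {n : ℕ} (hn : 3 ≤ n) (x : ℝ) :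
    |iteratedDeriv n (fun x : ℝ => Real.exp (-x ^ 2)) x| ≤ n ! * √2 ^ n := by
  have hn' : (3 : ℝ) ≤ n := by exact_mod_cast hn
  set R := √((n : ℝ) / 2)
  have hR : 0 < R := Real.sqrt_pos.2 (by positivity)
  have hR2 : R ^ 2 = n / 2 := Real.sq_sqrt (by positivity)
  refine (abs_iteratedDeriv_exp_neg_sq_le_of_pos n x hR).trans ?_
  rw [hR2, div_le_iff₀ (by positivity), mul_assoc, ← mul_pow]
  gcongr
  have hexp : Real.exp (n / 2) = Real.exp (1 / 2) ^ n := by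
    rw [← Real.exp_nat_mul]; ring_nf
  have hbase : Real.exp (1 / 2) ≤ √2 * R := by
    rw [Real.exp_half, ← Real.sqrt_mul zero_le_two, mul_div_cancel₀ _ two_ne_zero]
    exact Real.sqrt_le_sqrt (by linarith [Real.exp_one_lt_d9])
  rw [hexp]
  gcongr

theorem abs_mul_exp_neg_sq_le {a C : ℝ} (u : ℝ) (h : |a| ≤ C * (1 + u ^ 2)) :
    |a * Real.exp (-u ^ 2)| ≤ C := by
  have hC : 0 ≤ C := nonneg_of_mul_nonneg_left ((abs_nonneg a).trans h) (by positivity)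
  rw [abs_mul, Real.abs_exp, Real.exp_neg, ← div_eq_mul_inv, div_le_iff₀ (Real.exp_pos _)]
  calc |a| ≤ C * (1 + u ^ 2) := h
    _ ≤ C * Real.exp (u ^ 2) := by gcongr; linarith [Real.add_one_le_exp (u ^ 2)]

theorem hasDerivAt_exp_neg_sq (x : ℝ) :
    HasDerivAt (fun x : ℝ => Real.exp (-x ^ 2)) (-2 * x * Real.exp (-x ^ 2)) x := by
  have h := (hasDerivAt_pow 2 x).neg.exp
  simp only [Pi.neg_def, Nat.cast_ofNat] at h
  convert h using 1
  ring

theorem deriv_exp_neg_sq :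
    deriv (fun x : ℝ => Real.exp (-x ^ 2)) = fun x => -2 * x * Real.exp (-x ^ 2) :=
  funext fun x => (hasDerivAt_exp_neg_sq x).deriv

theorem iteratedDeriv_two_exp_neg_sq :
    iteratedDeriv 2 (fun x : ℝ => Real.exp (-x ^ 2)) =
      fun x => (4 * x ^ 2 - 2) * Real.exp (-x ^ 2) := by
  rw [iteratedDeriv_succ, iteratedDeriv_one, deriv_exp_neg_sq]
  funext x
  have h : HasDerivAt (fun y => -2 * y * Real.exp (-y ^ 2))
      (-2 * 1 * Real.exp (-x ^ 2) + -2 * x * (-2 * x * Real.exp (-x ^ 2))) x :=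
    ((hasDerivAt_id' x).const_mul (-2)).mul (hasDerivAt_exp_neg_sq x)
  rw [h.deriv]
  ring

theorem abs_iteratedDeriv_exp_neg_sq_le (n : ℕ) (x : ℝ) :
    |iteratedDeriv n (fun x : ℝ => Real.exp (-x ^ 2)) x| ≤ n ! * √2 ^ n := by
  have hs : √2 ^ 2 = 2 := Real.sq_sqrt zero_le_two
  match n with
  | 0 =>
    simpa using abs_mul_exp_neg_sq_le (a := 1) (C := 1) x
      (by rw [abs_one, one_mul]; exact le_add_of_nonneg_right (sq_nonneg x))
  | 1 =>
    rw [iteratedDeriv_one, deriv_exp_neg_sq]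
    refine (abs_mul_exp_neg_sq_le (C := √2) x ?_).trans_eq (by simp)
    -- `2|x| ≤ √2 (1 + x²)` is AM-GM for `√2 |x|` and `1`
    rw [abs_mul, abs_neg, abs_two]
    nlinarith [mul_nonneg (Real.sqrt_nonneg 2) (sq_nonneg (√2 * |x| - 1)), sq_abs x,
      Real.sqrt_nonneg 2]
  | 2 =>
    rw [iteratedDeriv_two_exp_neg_sq]
    refine (abs_mul_exp_neg_sq_le (C := 4) x ?_).trans_eq (by norm_num [hs])
    rw [abs_le]
    constructor <;> nlinarith [sq_nonneg x]
  | n + 3 => exact abs_iteratedDeriv_exp_neg_sq_le_of_three_le (by omega) x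

theorem abs_hermiteFun_le (n : ℕ) (u : ℝ) : |hermiteFun n u| ≤ n ! * √2 ^ n := by
  simpa [hermiteFun, abs_mul] using abs_iteratedDeriv_exp_neg_sq_le n u

theorem abs_hermite_term_le (n : ℕ) (a u : ℝ) :
    |1 / (n ! : ℝ) * a ^ n * hermiteFun n u| ≤ (|a| * √2) ^ n := by
  have hfac : (0 : ℝ) < n ! := by positivity
  rw [abs_mul, abs_mul, abs_pow, abs_div, abs_one, abs_of_pos hfac, mul_pow]
  calc 1 / (n ! : ℝ) * |a| ^ n * |hermiteFun n u|
      ≤ 1 / (n ! : ℝ) * |a| ^ n * (n ! * √2 ^ n) := by gcongr; exact abs_hermiteFun_le n u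
    _ = |a| ^ n * √2 ^ n := by field_simp

theorem hermite_partial_sum_bound_general (h ρ : ℝ) (hh : 0 < h) (hρ1 : ρ < 1)
    (p : ℕ) (s c t : ℝ) (hsc : |s - c| < ρ * h) :
    |∑ n ∈ Finset.range p, (1 / (Nat.factorial n : ℝ)) *
        ((s - c) / Real.sqrt (2 * h ^ 2)) ^ n *
        hermiteFun n ((t - c) / Real.sqrt (2 * h ^ 2))|
      ≤ (1 - ρ ^ p) / (1 - ρ) := by
  have hsqrt : √(2 * h ^ 2) = √2 * h := by
    rw [Real.sqrt_mul zero_le_two, Real.sqrt_sq hh.le]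
  have hratio : |(s - c) / √(2 * h ^ 2)| * √2 ≤ ρ := by
    have hs2 : 0 < √2 := by positivity
    rw [hsqrt, abs_div, abs_of_pos (mul_pos hs2 hh), div_mul_eq_mul_div,
      div_le_iff₀ (mul_pos hs2 hh)]
    nlinarith
  calc _ ≤ ∑ n ∈ range p, |1 / (n ! : ℝ) * ((s - c) / √(2 * h ^ 2)) ^ n *
          hermiteFun n ((t - c) / √(2 * h ^ 2))| := abs_sum_le_sum_abs _ _
    _ ≤ ∑ n ∈ range p, ρ ^ n := sum_le_sum fun n _ =>
          (abs_hermite_term_le n _ _).trans (pow_le_pow_left₀ (by positivity) hratio n)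
    _ = (1 - ρ ^ p) / (1 - ρ) := by
          rw [range_eq_Ico, geom_sum_Ico' hρ1.ne (Nat.zero_le p), pow_zero]

/-- Bound on the partial sum of the one-dimensional Hermite expansion:
if `|s − c| < ρh` with `0 < ρ < 1`, then
`|Σ_{n=0}^{p−1} (1/n!) ((s − c)/√(2h²))ⁿ hₙ((t − c)/√(2h²))| ≤ (1 − ρᵖ)/(1 − ρ)`. -/
theorem hermite_partial_sum_bound (h ρ : ℝ) (hh : 0 < h) (hρ0 : 0 < ρ) (hρ1 : ρ < 1)
    (p : ℕ) (hp : 1 ≤ p) (s c t : ℝ) (hsc : |s - c| < ρ * h) :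
    |∑ n ∈ Finset.range p, (1 / (Nat.factorial n : ℝ)) *
        ((s - c) / Real.sqrt (2 * h ^ 2)) ^ n *
        hermiteFun n ((t - c) / Real.sqrt (2 * h ^ 2))|
      ≤ (1 - ρ ^ p) / (1 - ρ) :=
  hermite_partial_sum_bound_general h ρ hh hρ1 p s c t hsc
end
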